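/- Let Ω ⊆ ℝ² be open, ω, c > 0. Let v : Ω → ℂ² be three times continuously differentiable with curl₂D v = 0, set p := −(i c²/ω) div v, and let v₂ : Ω → ℂ² be twice continuously differentiable, p₂ : Ω → ℂ continuously differentiable, satisfying on Ω: −2iω v₂ + ∇p₂ = −(1/2)(v·∇)v and −2iω p₂ + c² div v₂ = −(1/2) div(p v). Then p₂ satisfies on Ω: Δp₂ + (4ω²/c²) p₂ = −(1/4) Δ(v·v) − (iω/c²) div(p v), where v·v = v₁² + v₂² is the complex-bilinear square. -/

import Mathlib

noncomputable section

/-- Points of the plane. -/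
abbrev Pt : Type := Fin 2 → ℝ

/-- Partial derivative `∂ᵢ g` of a complex-valued function on the plane. -/
def pd (i : Fin 2) (g : Pt → ℂ) (x : Pt) : ℂ := fderiv ℝ g x (Pi.single i 1)

/-- Divergence of a planar complex vector field. -/
def vdiv (v : Pt → Fin 2 → ℂ) (x : Pt) : ℂ := ∑ i, pd i (fun y => v y i) x

/-- Laplacian of a complex-valued function on the plane. -/
def lap (g : Pt → ℂ) (x : Pt) : ℂ := ∑ i, pd i (fun y => pd i g y) x

/-- Advection term `(u·∇)w` (j-th component). -/
def adv (u w : Pt → Fin 2 → ℂ) (x : Pt) (j : Fin 2) : ℂ :=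
  ∑ i, u x i * pd i (fun y => w y j) x

/-- Two-dimensional curl `∂₁u₂ − ∂₂u₁`. -/
def curl2D (v : Pt → Fin 2 → ℂ) (x : Pt) : ℂ :=
  pd 0 (fun y => v y 1) x - pd 1 (fun y => v y 0) x

/-!
Taking the divergence of the momentum equation turns `∇p₂` into `Δp₂` and `v₂` into `div v₂`,
which the continuity equation expresses through `p₂` and `div(p v)`. The advection term becomes a
gradient because `v` is curl-free: the Jacobian of `v` is then symmetric, so
`((v·∇)v)ⱼ = ∑ᵢ vᵢ ∂ⱼvᵢ = ½ ∂ⱼ(v·v)`, and its divergence is `½ Δ(v·v)`.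
-/

section PartialDerivatives

variable {f g : Pt → ℂ} {x : Pt}

lemma pd_congr_of_eqOn {Ω : Set Pt} (hΩ : IsOpen Ω) (hx : x ∈ Ω) (h : Set.EqOn f g Ω)
    (i : Fin 2) : pd i f x = pd i g x := by
  rw [pd, pd, Filter.EventuallyEq.fderiv_eq (Filter.eventuallyEq_of_mem (hΩ.mem_nhds hx) h)]

lemma pd_add (hf : DifferentiableAt ℝ f x) (hg : DifferentiableAt ℝ g x) (i : Fin 2) :
    pd i (fun y => f y + g y) x = pd i f x + pd i g x := by
  simp only [pd, fderiv_fun_add hf hg, add_apply]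

lemma pd_const_mul (hf : DifferentiableAt ℝ f x) (a : ℂ) (i : Fin 2) :
    pd i (fun y => a * f y) x = a * pd i f x := by
  simp only [pd, fderiv_const_mul hf, smul_apply, smul_eq_mul]

lemma pd_mul (hf : DifferentiableAt ℝ f x) (hg : DifferentiableAt ℝ g x) (i : Fin 2) :
    pd i (fun y => f y * g y) x = f x * pd i g x + g x * pd i f x := by
  simp only [pd, fderiv_fun_mul hf hg, add_apply, smul_apply, smul_eq_mul]

lemma pd_sum {ι : Type*} (s : Finset ι) {F : ι → Pt → ℂ}
    (hF : ∀ k ∈ s, DifferentiableAt ℝ (F k) x) (i : Fin 2) :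
    pd i (fun y => ∑ k ∈ s, F k y) x = ∑ k ∈ s, pd i (F k) x := by
  simp only [pd, fderiv_fun_sum hF, sum_apply]

lemma contDiffOn_pd {Ω : Set Pt} (hΩ : IsOpen Ω) {n : ℕ} (hg : ContDiffOn ℝ (n + 1) g Ω)
    (i : Fin 2) : ContDiffOn ℝ n (pd i g) Ω :=
  (hg.fderiv_of_isOpen hΩ le_rfl).clm_apply contDiffOn_const

end PartialDerivatives

lemma pd_comm_of_curl2D_eq_zero {v : Pt → Fin 2 → ℂ} {x : Pt} (hcurl : curl2D v x = 0)
    (i j : Fin 2) : pd i (fun y => v y j) x = pd j (fun y => v y i) x := by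
  rw [curl2D, sub_eq_zero] at hcurl
  fin_cases i <;> fin_cases j
  exacts [rfl, hcurl, hcurl.symm, rfl]

lemma adv_self_eq_of_curl2D_eq_zero {v : Pt → Fin 2 → ℂ} {x : Pt}
    (hv : ∀ i, DifferentiableAt ℝ (fun y => v y i) x) (hcurl : curl2D v x = 0) (j : Fin 2) :
    adv v v x j = 1 / 2 * pd j (fun y => ∑ i, v y i * v y i) x := by
  have hsq : ∀ i, pd j (fun y => v y i * v y i) x = 2 * (v x i * pd j (fun y => v y i) x) :=
    fun i => by rw [pd_mul (hv i) (hv i)]; ring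
  rw [pd_sum _ (fun i _ => (hv i).fun_mul (hv i)), Finset.mul_sum, adv]
  refine Finset.sum_congr rfl fun i _ => ?_
  rw [hsq, pd_comm_of_curl2D_eq_zero hcurl]
  ring

lemma lap_eq_of_pd_eq {Ω : Set Pt} (hΩ : IsOpen Ω) {x : Pt} (hx : x ∈ Ω)
    {g h : Pt → ℂ} {w : Pt → Fin 2 → ℂ} {a b : ℂ}
    (hw : ∀ j, DifferentiableAt ℝ (fun y => w y j) x) (hh : ∀ j, DifferentiableAt ℝ (pd j h) x)
    (hg : ∀ y ∈ Ω, ∀ j, pd j g y = a * w y j + b * pd j h y) :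
    lap g x = a * vdiv w x + b * lap h x := by
  have hpd : ∀ j, pd j (pd j g) x = a * pd j (fun y => w y j) x + b * pd j (pd j h) x := by
    intro j
    rw [pd_congr_of_eqOn hΩ hx (fun y hy => hg y hy j),
      pd_add ((hw j).const_mul a) ((hh j).const_mul b), pd_const_mul (hw j),
      pd_const_mul (hh j)]
  simp only [lap, vdiv, hpd, Finset.sum_add_distrib, Finset.mul_sum]

theorem stmt_16_general (Ω : Set Pt) (hΩ : IsOpen Ω) (ω c : ℝ) (hc : 0 < c)
    (v : Pt → Fin 2 → ℂ) (hv : ContDiffOn ℝ 3 v Ω)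
    (hcurl : ∀ x ∈ Ω, curl2D v x = 0)
    (p : Pt → ℂ)
    (v₂ : Pt → Fin 2 → ℂ) (hv₂ : ContDiffOn ℝ 2 v₂ Ω)
    (p₂ : Pt → ℂ)
    (hmom : ∀ x ∈ Ω, ∀ j : Fin 2,
      -2 * Complex.I * ω * v₂ x j + pd j p₂ x = -(1 / 2) * adv v v x j)
    (hcont : ∀ x ∈ Ω,
      -2 * Complex.I * ω * p₂ x + c ^ 2 * vdiv v₂ x
        = -(1 / 2) * vdiv (fun y i => p y * v y i) x) :
    ∀ x ∈ Ω,
      lap p₂ x + (4 * (ω : ℂ) ^ 2 / c ^ 2) * p₂ x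
        = -(1 / 4) * lap (fun y => ∑ i, v y i * v y i) x
          - Complex.I * ω / c ^ 2 * vdiv (fun y i => p y * v y i) x := by
  intro x hx
  have hvi : ∀ i, ContDiffOn ℝ 3 (fun y => v y i) Ω := contDiffOn_pi.mp hv
  have hgrad : ∀ y ∈ Ω, ∀ j, pd j p₂ y
      = 2 * Complex.I * ω * v₂ y j + -(1 / 4) * pd j (fun y => ∑ i, v y i * v y i) y := by
    intro y hy j
    have hvy i := ((hvi i).differentiableOn (by norm_num)).differentiableAt (hΩ.mem_nhds hy)
    linear_combination hmom y hy j - 1 / 2 * adv_self_eq_of_curl2D_eq_zero hvy (hcurl y hy) j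
  have hv₂x j := ((contDiffOn_pi.mp hv₂ j).differentiableOn (by norm_num)).differentiableAt
    (hΩ.mem_nhds hx)
  have hsq : ContDiffOn ℝ (2 + 1) (fun y => ∑ i, v y i * v y i) Ω :=
    ContDiffOn.sum fun i _ => (hvi i).mul (hvi i)
  have hpdsq j := ((contDiffOn_pd hΩ hsq j).differentiableOn (by norm_num)).differentiableAt
    (hΩ.mem_nhds hx)
  rw [lap_eq_of_pd_eq hΩ hx hv₂x hpdsq hgrad]
  have hc' : (c : ℂ) ≠ 0 := by exact_mod_cast hc.ne'
  field_simp
  linear_combination 8 * Complex.I * (ω : ℂ) * hcont x hx + 16 * (ω : ℂ) ^ 2 * p₂ x * Complex.I_sq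

/-- let `v` be C³ and curl-free on open `Ω ⊆ ℝ²`, `p := −(ic²/ω) div v`,
and let `(v₂, p₂)` satisfy the second-harmonic system `−2iω v₂ + ∇p₂ = −(1/2)(v·∇)v`,
`−2iω p₂ + c² div v₂ = −(1/2) div(p v)` on `Ω`. Then
`Δp₂ + (4ω²/c²) p₂ = −(1/4)Δ(v·v) − (iω/c²) div(p v)` on `Ω`. -/
theorem stmt_16 (Ω : Set Pt) (hΩ : IsOpen Ω) (ω c : ℝ) (hω : 0 < ω) (hc : 0 < c)
    (v : Pt → Fin 2 → ℂ) (hv : ContDiffOn ℝ 3 v Ω)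
    (hcurl : ∀ x ∈ Ω, curl2D v x = 0)
    (p : Pt → ℂ) (hp : ∀ x, p x = -(Complex.I * c ^ 2 / ω) * vdiv v x)
    (v₂ : Pt → Fin 2 → ℂ) (hv₂ : ContDiffOn ℝ 2 v₂ Ω)
    (p₂ : Pt → ℂ) (hp₂ : ContDiffOn ℝ 1 p₂ Ω)
    (hmom : ∀ x ∈ Ω, ∀ j : Fin 2,
      -2 * Complex.I * ω * v₂ x j + pd j p₂ x = -(1 / 2) * adv v v x j)
    (hcont : ∀ x ∈ Ω,
      -2 * Complex.I * ω * p₂ x + c ^ 2 * vdiv v₂ x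
        = -(1 / 2) * vdiv (fun y i => p y * v y i) x) :
    ∀ x ∈ Ω,
      lap p₂ x + (4 * (ω : ℂ) ^ 2 / c ^ 2) * p₂ x
        = -(1 / 4) * lap (fun y => ∑ i, v y i * v y i) x
          - Complex.I * ω / c ^ 2 * vdiv (fun y i => p y * v y i) x :=
  stmt_16_general Ω hΩ ω c hc v hv hcurl p v₂ hv₂ p₂ hmom hcont
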